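/- Let G' be a finite directed graph with nonnegative edge weights containing a directed path P₂ of total length 0 and a sequence P₁ of distinct vertices disjoint from P₂ equipped with a linear order ≤_{P₁}, such that no vertex of P₁ has an outgoing edge in G' and every edge of G' whose head lies on P₂ is an edge of P₂. Assume the crossing hypothesis: whenever W is a walk in G' from a vertex b of P₂ to a vertex p of P₁ and W' is a walk in G' from a vertex b' of P₂ to a vertex p' of P₁ with b' <_{P₂} b and p' <_{P₁} p, the walks W and W' share a vertex. Let β > 0 and ε > 0, write v_f = dfirst_{G'}(v,P₁,β) when it exists, and let B be the set of maximal pairs (v, v_f), i.e., those with v_f defined and no u >_{P₂} v with u_f defined and u_f ≤_{P₁} v_f. Then B can be partitioned into t classes with t ≤ 1/ε + 1 such that for any two distinct pairs (b₁,p₁) and (b₂,p₂) in the same class with b₂ <_{P₂} b₁, some walk in G' from b₁ to p₂ has length at most (1+ε)β. -/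

import Mathlib

/-- A walk in the directed graph with edge relation `E`: a nonempty list of vertices
starting at `u`, ending at `v`, with every consecutive pair an edge. -/
def IsWalk {V : Type*} (E : V → V → Prop) (l : List V) (u v : V) : Prop :=
  l ≠ [] ∧ l.head? = some u ∧ l.getLast? = some v ∧ l.Chain' E

/-- The length of a walk: the sum of the weights of its consecutive pairs. -/
def walkLen {V : Type*} (w : V → V → ℝ) (l : List V) : ℝ :=
  ((l.zip l.tail).map fun q => w q.1 q.2).sum

/-- `b` is `dfirst_G(v,Q,β)`: the `≤_Q`-least vertex of the ordered vertex list `q`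
reachable from `v` by a walk of length at most `β`. -/
def IsDFirst {V : Type*} [DecidableEq V] (E : V → V → Prop) (w : V → V → ℝ)
    (v : V) (q : List V) (β : ℝ) (b : V) : Prop :=
  b ∈ q ∧ (∃ l, IsWalk E l v b ∧ walkLen w l ≤ β) ∧
    ∀ c ∈ q, (∃ l, IsWalk E l v c ∧ walkLen w l ≤ β) → q.idxOf b ≤ q.idxOf c

/-- `(v, vf)` is a maximal pair: `vf = dfirst(v,P₁,β)` and there is no `u` strictly
later than `v` on `P₂` with `u_f` defined and `u_f ≤_{P₁} vf`. -/
def MaximalPair {V : Type*} [DecidableEq V] (E : V → V → Prop) (w : V → V → ℝ)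
    (p₂ p₁ : List V) (β : ℝ) (v vf : V) : Prop :=
  v ∈ p₂ ∧ IsDFirst E w v p₁ β vf ∧
    ¬ ∃ u uf, u ∈ p₂ ∧ p₂.idxOf v < p₂.idxOf u ∧
      IsDFirst E w u p₁ β uf ∧ p₁.idxOf uf ≤ p₁.idxOf vf

/-
Sort a maximal pair `(b, b_f)` into the bucket `⌊d(b) / (εβ)⌋`, where `d(b)` is the least length
of a walk of length at most `β` from `b` into `P₁`; since `0 ≤ d ≤ β` there are at most
`1/ε + 1` buckets. Let `(b₁, q₁)` and `(b₂, q₂)` share a bucket with `b₂ <_{P₂} b₁`. Maximality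
of `(b₂, q₂)` gives `q₂ <_{P₁} q₁`, so a near-shortest walk `W` from `b₁`, of length
`< d(b₂) + εβ` and ending at some `c ≥_{P₁} q₁`, meets the walk `W₂` from `b₂` to `q₂` in a
vertex `x`. Exchanging tails at `x` yields walks `b₁ ⇝ q₂` and `b₂ ⇝ c` of total length
`|W| + |W₂|`. If `b₂ ⇝ c` is longer than `β`, then `b₁ ⇝ q₂` is shorter than `|W| ≤ β`;
otherwise `b₂ ⇝ c` has length at least `d(b₂)`, and `b₁ ⇝ q₂` has length at most
`d(b₂) + εβ + β - d(b₂)`.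
-/

section Walks

variable {V : Type*} {E : V → V → Prop} (w : V → V → ℝ)

lemma walkLen_cons_cons (p q : V) (l : List V) :
    walkLen w (p :: q :: l) = w p q + walkLen w (q :: l) := by
  simp [walkLen]

lemma walkLen_append_cons (a : List V) (x : V) (b : List V) :
    walkLen w (a ++ x :: b) = walkLen w (a ++ [x]) + walkLen w (x :: b) := by
  induction a with
  | nil => simp [walkLen]
  | cons y t ih =>
    cases t with
    | nil => simp [walkLen]
    | cons z t => simp only [List.cons_append, walkLen_cons_cons] at ih ⊢; rw [ih]; ring

lemma walkLen_nonneg {w : V → V → ℝ} (hw : ∀ x y, 0 ≤ w x y) (l : List V) :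
    0 ≤ walkLen w l :=
  List.sum_nonneg fun _ h => by
    obtain ⟨q, -, rfl⟩ := List.mem_map.1 h
    exact hw _ _

lemma IsWalk.splice {a b a' b' : List V} {x u v u' v' : V} (h : IsWalk E (a ++ x :: b) u v)
    (h' : IsWalk E (a' ++ x :: b') u' v') : IsWalk E (a ++ x :: b') u v' := by
  obtain ⟨-, hu, -, hc⟩ := h
  obtain ⟨-, -, hv', hc'⟩ := h'
  refine ⟨by simp, by simpa [List.head?_append] using hu, ?_, ?_⟩
  · rwa [List.getLast?_append_cons] at hv' ⊢
  · have hc : List.IsChain E (a ++ [x] ++ b) := by rw [List.append_assoc]; exact hc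
    have hc' : List.IsChain E (a' ++ ([x] ++ b')) := hc'
    show List.IsChain E _
    simpa using hc.left_of_append.append_overlap hc'.right_of_append (List.cons_ne_nil x [])

lemma exists_walk_of_mem_of_mem {w : V → V → ℝ} {l l' : List V} {x u v u' v' : V} {β δ : ℝ}
    (hδ : 0 ≤ δ) (hW : IsWalk E l u v) (hW' : IsWalk E l' u' v') (hx : x ∈ l) (hx' : x ∈ l')
    (hl : walkLen w l ≤ β) (hl' : walkLen w l' ≤ β)
    (hopt : ∀ m, IsWalk E m u' v → walkLen w m ≤ β → walkLen w l ≤ walkLen w m + δ) :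
    ∃ m, IsWalk E m u v' ∧ walkLen w m ≤ β + δ := by
  obtain ⟨a, b, rfl⟩ := List.append_of_mem hx
  obtain ⟨a', b', rfl⟩ := List.append_of_mem hx'
  refine ⟨a ++ x :: b', hW.splice hW', ?_⟩
  have hswap : walkLen w (a ++ x :: b') + walkLen w (a' ++ x :: b) =
      walkLen w (a ++ x :: b) + walkLen w (a' ++ x :: b') := by
    rw [walkLen_append_cons w a x b', walkLen_append_cons w a' x b, walkLen_append_cons w a x b,
      walkLen_append_cons w a' x b']
    ring
  by_cases hshort : walkLen w (a' ++ x :: b) ≤ β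
  · linarith [hopt _ (hW'.splice hW) hshort]
  · linarith

end Walks

section TruncDist

variable {V : Type*} (E : V → V → Prop) (w : V → V → ℝ) (q : List V) (β : ℝ)

-- `sInf ∅ = 0`: the value is `0` when no walk of length at most `β` leads from `v` into `q`.
noncomputable def truncDist (v : V) : ℝ :=
  sInf {r | ∃ l, ∃ c ∈ q, IsWalk E l v c ∧ walkLen w l = r ∧ r ≤ β}

variable {E w q β}

lemma truncDist_nonneg (hw : ∀ x y, 0 ≤ w x y) (v : V) : 0 ≤ truncDist E w q β v :=
  Real.sInf_nonneg fun _ ⟨l, _, _, _, hl, _⟩ => hl ▸ walkLen_nonneg hw l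

lemma truncDist_le_walkLen (hw : ∀ x y, 0 ≤ w x y) {l : List V} {v c : V} (hc : c ∈ q)
    (hl : IsWalk E l v c) (hlβ : walkLen w l ≤ β) : truncDist E w q β v ≤ walkLen w l :=
  csInf_le ⟨0, fun _ ⟨l, _, _, _, hl, _⟩ => hl ▸ walkLen_nonneg hw l⟩ ⟨l, c, hc, hl, rfl, hlβ⟩

lemma truncDist_le (hw : ∀ x y, 0 ≤ w x y) (hβ : 0 ≤ β) (v : V) : truncDist E w q β v ≤ β := by
  rcases Set.eq_empty_or_nonempty {r | ∃ l, ∃ c ∈ q, IsWalk E l v c ∧ walkLen w l = r ∧ r ≤ β}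
    with h | ⟨_, l, c, hc, hl, rfl, hlβ⟩
  · rw [truncDist, h, Real.sInf_empty]; exact hβ
  · exact (truncDist_le_walkLen hw hc hl hlβ).trans hlβ

lemma exists_walk_lt_of_truncDist_lt {l : List V} {v c : V} {r : ℝ} (hc : c ∈ q)
    (hl : IsWalk E l v c) (hlβ : walkLen w l ≤ β) (hr : truncDist E w q β v < r) :
    ∃ l', ∃ c' ∈ q, IsWalk E l' v c' ∧ walkLen w l' ≤ β ∧ walkLen w l' < r := by
  obtain ⟨_, ⟨l', c', hc', hl', rfl, hl'β⟩, hlt⟩ :=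
    exists_lt_of_csInf_lt (s := {r | ∃ l, ∃ c ∈ q, IsWalk E l v c ∧ walkLen w l = r ∧ r ≤ β})
      ⟨_, l, c, hc, hl, rfl, hlβ⟩ hr
  exact ⟨l', c', hc', hl', hl'β, hlt⟩

end TruncDist

lemma lt_add_of_floor_div_eq {r s δ : ℝ} (hδ : 0 < δ) (hs : 0 ≤ s)
    (h : ⌊r / δ⌋₊ = ⌊s / δ⌋₊) : r < s + δ := by
  have hr := Nat.lt_floor_add_one (r / δ)
  have hs' := Nat.floor_le (div_nonneg hs hδ.le)
  rw [h] at hr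
  have : r / δ < (s + δ) / δ := by rw [add_div, div_self hδ.ne']; linarith
  exact (div_lt_div_iff_of_pos_right hδ).1 this

section Crossing

variable {V : Type*} [DecidableEq V] {E : V → V → Prop} {w : V → V → ℝ} {p₂ p₁ : List V}
  {β : ℝ}

def WalksCross (E : V → V → Prop) (p₂ p₁ : List V) : Prop :=
  ∀ (lw lw' : List V) (b q b' q' : V), b ∈ p₂ → q ∈ p₁ → b' ∈ p₂ → q' ∈ p₁ →
    IsWalk E lw b q → IsWalk E lw' b' q' →
    p₂.idxOf b' < p₂.idxOf b → p₁.idxOf q' < p₁.idxOf q → ∃ x, x ∈ lw ∧ x ∈ lw'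

lemma MaximalPair.idxOf_lt {b₁ q₁ b₂ q₂ : V} (hM : MaximalPair E w p₂ p₁ β b₂ q₂)
    (hb₁ : b₁ ∈ p₂) (hD : IsDFirst E w b₁ p₁ β q₁) (hlt : p₂.idxOf b₂ < p₂.idxOf b₁) :
    p₁.idxOf q₂ < p₁.idxOf q₁ :=
  not_le.1 fun h => hM.2.2 ⟨b₁, q₁, hb₁, hlt, hD, h⟩

lemma exists_walk_of_maximalPair (hw : ∀ x y, 0 ≤ w x y) (hcross : WalksCross E p₂ p₁)
    {δ : ℝ} (hδ : 0 ≤ δ) {b₁ q₁ b₂ q₂ : V} (hb₁ : b₁ ∈ p₂) (hD₁ : IsDFirst E w b₁ p₁ β q₁)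
    (hM₂ : MaximalPair E w p₂ p₁ β b₂ q₂) (hlt : p₂.idxOf b₂ < p₂.idxOf b₁)
    (hgap : truncDist E w p₁ β b₁ < truncDist E w p₁ β b₂ + δ) :
    ∃ l, IsWalk E l b₁ q₂ ∧ walkLen w l ≤ β + δ := by
  have hq := hM₂.idxOf_lt hb₁ hD₁ hlt
  obtain ⟨hq₁, ⟨l₁, hl₁, hl₁β⟩, hfirst⟩ := hD₁
  obtain ⟨hb₂, ⟨hq₂, ⟨l₂, hl₂, hl₂β⟩, -⟩, -⟩ := hM₂
  obtain ⟨l, c, hc, hl, hlβ, hl_lt⟩ := exists_walk_lt_of_truncDist_lt hq₁ hl₁ hl₁β hgap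
  obtain ⟨x, hx, hx₂⟩ := hcross l l₂ b₁ c b₂ q₂ hb₁ hc hb₂ hq₂ hl hl₂ hlt
    (hq.trans_le (hfirst c hc ⟨l, hl, hlβ⟩))
  refine exists_walk_of_mem_of_mem hδ hl hl₂ hx hx₂ hlβ hl₂β fun m hm hmβ => ?_
  linarith [truncDist_le_walkLen hw hc hm hmβ]

end Crossing

theorem stmt_8_general {V : Type*} [DecidableEq V] (E : V → V → Prop)
    (w : V → V → ℝ) (hw : ∀ x y, 0 ≤ w x y)
    (p₂ p₁ : List V)
    (hcross : ∀ (lw lw' : List V) (b q b' q' : V),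
      b ∈ p₂ → q ∈ p₁ → b' ∈ p₂ → q' ∈ p₁ →
      IsWalk E lw b q → IsWalk E lw' b' q' →
      p₂.idxOf b' < p₂.idxOf b → p₁.idxOf q' < p₁.idxOf q →
      ∃ x, x ∈ lw ∧ x ∈ lw')
    (β ε : ℝ) (hβ : 0 < β) (hε : 0 < ε) :
    ∃ (t : ℕ) (cl : V × V → Fin t), (t : ℝ) ≤ 1 / ε + 1 ∧
      ∀ b₁ q₁ b₂ q₂, MaximalPair E w p₂ p₁ β b₁ q₁ → MaximalPair E w p₂ p₁ β b₂ q₂ →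
        cl (b₁, q₁) = cl (b₂, q₂) → p₂.idxOf b₂ < p₂.idxOf b₁ →
        ∃ l, IsWalk E l b₁ q₂ ∧ walkLen w l ≤ (1 + ε) * β := by
  have hεβ : 0 < ε * β := mul_pos hε hβ
  set d := truncDist E w p₁ β
  have hbucket (v : V) : ⌊d v / (ε * β)⌋₊ < ⌊1 / ε⌋₊ + 1 := by
    refine Nat.lt_succ_of_le (Nat.floor_le_floor ?_)
    calc d v / (ε * β) ≤ β / (ε * β) := by gcongr; exact truncDist_le hw hβ.le v
      _ = 1 / ε := by field_simp
  refine ⟨⌊1 / ε⌋₊ + 1, fun p => ⟨_, hbucket p.1⟩, ?_, ?_⟩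
  · push_cast
    linarith [Nat.floor_le (one_div_pos.2 hε).le]
  · rintro b₁ q₁ b₂ q₂ ⟨hb₁, hD₁, -⟩ hM₂ hcl hlt
    have hgap := lt_add_of_floor_div_eq hεβ (truncDist_nonneg hw b₂) (Fin.val_eq_of_eq hcl)
    obtain ⟨l, hl, hlen⟩ := exists_walk_of_maximalPair hw hcross hεβ.le hb₁ hD₁ hM₂ hlt hgap
    exact ⟨l, hl, by linarith⟩

/-- The set `B` of maximal pairs can be partitioned into `t ≤ 1/ε + 1`
classes so that for any two distinct pairs `(b₁,p₁f)` and `(b₂,p₂f)` in the same class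
with `b₂ <_{P₂} b₁`, some walk from `b₁` to `p₂f` has length at most `(1+ε)β`. -/
theorem stmt_8 {V : Type*} [Fintype V] [DecidableEq V] (E : V → V → Prop)
    (w : V → V → ℝ) (hw : ∀ x y, 0 ≤ w x y)
    (p₂ p₁ : List V) (hp₂nd : p₂.Nodup) (hp₂ch : p₂.Chain' E)
    (hp₂len : walkLen w p₂ = 0) (hp₁nd : p₁.Nodup)
    (hdisj : ∀ x ∈ p₁, x ∉ p₂)
    (hnoout : ∀ x ∈ p₁, ∀ y, ¬ E x y)
    (hhead : ∀ x y, E x y → y ∈ p₂ → ∃ i, p₂[i]? = some x ∧ p₂[i+1]? = some y)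
    (hcross : ∀ (lw lw' : List V) (b q b' q' : V),
      b ∈ p₂ → q ∈ p₁ → b' ∈ p₂ → q' ∈ p₁ →
      IsWalk E lw b q → IsWalk E lw' b' q' →
      p₂.idxOf b' < p₂.idxOf b → p₁.idxOf q' < p₁.idxOf q →
      ∃ x, x ∈ lw ∧ x ∈ lw')
    (β ε : ℝ) (hβ : 0 < β) (hε : 0 < ε) :
    ∃ (t : ℕ) (cl : V × V → Fin t), (t : ℝ) ≤ 1 / ε + 1 ∧
      ∀ b₁ q₁ b₂ q₂, MaximalPair E w p₂ p₁ β b₁ q₁ → MaximalPair E w p₂ p₁ β b₂ q₂ →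
        cl (b₁, q₁) = cl (b₂, q₂) → p₂.idxOf b₂ < p₂.idxOf b₁ →
        ∃ l, IsWalk E l b₁ q₂ ∧ walkLen w l ≤ (1 + ε) * β :=
  stmt_8_general E w hw p₂ p₁ hcross β ε hβ hε
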